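/- Let x_{B1} ∈ H₃ be given by x_{B1}(a,b,c) = 1/√2 if (a,b,c) ∈ {(0,0,0),(0,1,1)} and 0 otherwise. Then the ℂ-linear span of {(A⊗I⊗I)x_{B1} + (I⊗B⊗I)x_{B1} + (I⊗I⊗C)x_{B1} : A,B,C ∈ sl(2,ℂ)} has complex dimension 5, and it contains x_{B1}. (Consequently the SLOCC orbit of this bi-separable Bell state has real dimension 8 in projective space.) -/

import Mathlib

open scoped BigOperators

/-- The three-qubit Hilbert space. -/
abbrev H3 := (Fin 2 × Fin 2 × Fin 2) → ℂ

/-- Squared Hermitian norm of a vector in `H3`. -/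
noncomputable def normSq3 (v : H3) : ℝ := ∑ x : Fin 2 × Fin 2 × Fin 2, Complex.normSq (v x)

/-- First one-qubit reduced density matrix. -/
noncomputable def rho1 (v : H3) : Matrix (Fin 2) (Fin 2) ℂ :=
  Matrix.of fun a a' => ∑ b : Fin 2, ∑ c : Fin 2, v (a, b, c) * star (v (a', b, c))

/-- Second one-qubit reduced density matrix. -/
noncomputable def rho2 (v : H3) : Matrix (Fin 2) (Fin 2) ℂ :=
  Matrix.of fun b b' => ∑ a : Fin 2, ∑ c : Fin 2, v (a, b, c) * star (v (a, b', c))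

/-- Third one-qubit reduced density matrix. -/
noncomputable def rho3 (v : H3) : Matrix (Fin 2) (Fin 2) ℂ :=
  Matrix.of fun c c' => ∑ a : Fin 2, ∑ b : Fin 2, v (a, b, c) * star (v (a, b, c'))

/-- Minimal (real) eigenvalue of a 2×2 complex matrix. -/
noncomputable def minEig (ρ : Matrix (Fin 2) (Fin 2) ℂ) : ℝ :=
  sInf {t : ℝ | (t : ℂ) ∈ spectrum ℂ ρ}

noncomputable def p1 (v : H3) : ℝ := minEig (rho1 v)
noncomputable def p2 (v : H3) : ℝ := minEig (rho2 v)
noncomputable def p3 (v : H3) : ℝ := minEig (rho3 v)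

/-- The action of a triple of 2×2 matrices on `H3` by the tensor product. -/
noncomputable def tensor3 (A1 A2 A3 : Matrix (Fin 2) (Fin 2) ℂ) (v : H3) : H3 :=
  fun x => ∑ a' : Fin 2, ∑ b' : Fin 2, ∑ c' : Fin 2,
    A1 x.1 a' * A2 x.2.1 b' * A3 x.2.2 c' * v (a', b', c')

/-- Local unitary equivalence of three-qubit states. -/
def LUequiv (v w : H3) : Prop :=
  ∃ U1 U2 U3 : Matrix (Fin 2) (Fin 2) ℂ,
    U1 ∈ Matrix.unitaryGroup (Fin 2) ℂ ∧ U2 ∈ Matrix.unitaryGroup (Fin 2) ℂ ∧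
    U3 ∈ Matrix.unitaryGroup (Fin 2) ℂ ∧ w = tensor3 U1 U2 U3 v

/-- The three-qubit W state. -/
noncomputable def wState : H3 := fun x =>
  if (x.1 = 1 ∧ x.2.1 = 0 ∧ x.2.2 = 0) ∨ (x.1 = 0 ∧ x.2.1 = 1 ∧ x.2.2 = 0) ∨
      (x.1 = 0 ∧ x.2.1 = 0 ∧ x.2.2 = 1)
  then ((1 / Real.sqrt 3 : ℝ) : ℂ) else 0

/-- The SLOCC class of the W state. -/
def WClass : Set H3 :=
  {v | ∃ (A1 A2 A3 : Matrix (Fin 2) (Fin 2) ℂ) (l : ℂ),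
    A1.det = 1 ∧ A2.det = 1 ∧ A3.det = 1 ∧ l ≠ 0 ∧ v = l • tensor3 A1 A2 A3 wState}

/-- The bi-separable Bell state `x_{B1}`. -/
noncomputable def xB1 : H3 := fun x =>
  if x = ((0 : Fin 2), (0 : Fin 2), (0 : Fin 2)) ∨ x = ((0 : Fin 2), (1 : Fin 2), (1 : Fin 2))
  then ((1 / Real.sqrt 2 : ℝ) : ℂ) else 0

/-- The tangent vectors at `x_{B1}` generated by `sl(2,ℂ) ⊕ sl(2,ℂ) ⊕ sl(2,ℂ)`. -/
def sl2TangentB1 : Set H3 :=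
  {u | ∃ A B C : Matrix (Fin 2) (Fin 2) ℂ, A.trace = 0 ∧ B.trace = 0 ∧ C.trace = 0 ∧
    u = tensor3 A 1 1 xB1 + tensor3 1 B 1 xB1 + tensor3 1 1 C xB1}

/-!
Coordinatewise, a tangent vector `(A ⊗ I ⊗ I + I ⊗ B ⊗ I + I ⊗ I ⊗ C) x_{B1}` is `1/√2` times a
combination of `|000⟩, |011⟩, |001⟩, |010⟩, |100⟩ + |111⟩` whose coefficients are linear in the
entries of `A, B, C`. Traceless matrices hit each of these five independent vectors separately,
so they span the tangent space. Since the first qubit of `x_{B1}` is `|0⟩`, an eigenvector of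
`σ_z`, the state itself is the tangent vector `(σ_z ⊗ I ⊗ I) x_{B1}`.
-/

open Matrix

lemma tensor3_left_apply (A : Matrix (Fin 2) (Fin 2) ℂ) (v : H3) (a b c : Fin 2) :
    tensor3 A 1 1 v (a, b, c) = ∑ a', A a a' * v (a', b, c) := by
  simp [tensor3, one_apply]

lemma tensor3_middle_apply (B : Matrix (Fin 2) (Fin 2) ℂ) (v : H3) (a b c : Fin 2) :
    tensor3 1 B 1 v (a, b, c) = ∑ b', B b b' * v (a, b', c) := by
  simp [tensor3, one_apply]

lemma tensor3_right_apply (C : Matrix (Fin 2) (Fin 2) ℂ) (v : H3) (a b c : Fin 2) :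
    tensor3 1 1 C v (a, b, c) = ∑ c', C c c' * v (a, b, c') := by
  simp [tensor3, one_apply]

noncomputable def sl2Tangent (v : H3) (A B C : Matrix (Fin 2) (Fin 2) ℂ) : H3 :=
  tensor3 A 1 1 v + tensor3 1 B 1 v + tensor3 1 1 C v

def ket (x : Fin 2 × Fin 2 × Fin 2) : H3 := Pi.single x 1

def tangentBasisB1 : Fin 5 → H3 :=
  ![ket (0, 0, 0), ket (0, 1, 1), ket (0, 0, 1), ket (0, 1, 0), ket (1, 0, 0) + ket (1, 1, 1)]

def tangentCoordsB1 (A B C : Matrix (Fin 2) (Fin 2) ℂ) : Fin 5 → ℂ :=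
  ![A 0 0 + B 0 0 + C 0 0, A 0 0 + B 1 1 + C 1 1, B 0 1 + C 1 0, B 1 0 + C 0 1, A 1 0]

lemma sl2Tangent_xB1 (A B C : Matrix (Fin 2) (Fin 2) ℂ) :
    sl2Tangent xB1 A B C = (√2 : ℂ)⁻¹ • ∑ i, tangentCoordsB1 A B C i • tangentBasisB1 i := by
  funext ⟨a, b, c⟩
  fin_cases a <;> fin_cases b <;> fin_cases c <;>
    simp [sl2Tangent, tensor3_left_apply, tensor3_middle_apply, tensor3_right_apply, xB1,
      tangentCoordsB1, tangentBasisB1, ket, Fin.sum_univ_five] <;> ring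

lemma linearIndependent_tangentBasisB1 : LinearIndependent ℂ tangentBasisB1 := by
  rw [Fintype.linearIndependent_iff]
  intro g hg i
  have := fun x => congrFun hg x
  fin_cases i
  · simpa [Fin.sum_univ_five, tangentBasisB1, ket] using this (0, 0, 0)
  · simpa [Fin.sum_univ_five, tangentBasisB1, ket] using this (0, 1, 1)
  · simpa [Fin.sum_univ_five, tangentBasisB1, ket] using this (0, 0, 1)
  · simpa [Fin.sum_univ_five, tangentBasisB1, ket] using this (0, 1, 0)
  · simpa [Fin.sum_univ_five, tangentBasisB1, ket] using this (1, 0, 0)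

lemma mem_span_sl2TangentB1_of_eq_smul {A B C : Matrix (Fin 2) (Fin 2) ℂ}
    (hA : A.trace = 0) (hB : B.trace = 0) (hC : C.trace = 0) {c : ℂ} (hc : c ≠ 0) {v : H3}
    (h : sl2Tangent xB1 A B C = c • v) : v ∈ Submodule.span ℂ sl2TangentB1 :=
  (Submodule.smul_mem_iff _ hc).1 (h ▸ Submodule.subset_span ⟨A, B, C, hA, hB, hC, rfl⟩)

lemma span_sl2TangentB1_eq :
    Submodule.span ℂ sl2TangentB1 = Submodule.span ℂ (Set.range tangentBasisB1) := by
  apply le_antisymm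
  · rw [Submodule.span_le]
    rintro _ ⟨A, B, C, -, -, -, rfl⟩
    rw [← sl2Tangent, sl2Tangent_xB1]
    exact Submodule.smul_mem _ _ ((Submodule.mem_span_range_iff_exists_fun ℂ).2 ⟨_, rfl⟩)
  · have tr (a b c : ℂ) : (!![a, b; c, -a]).trace = 0 := by simp [trace_fin_two]
    have tr0 : (0 : Matrix (Fin 2) (Fin 2) ℂ).trace = 0 := trace_zero _ _
    have hs : (√2 : ℂ)⁻¹ ≠ 0 := by simp
    rw [Submodule.span_le]
    rintro _ ⟨i, rfl⟩
    fin_cases i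
    · refine mem_span_sl2TangentB1_of_eq_smul (tr 1 0 0) (tr 1 0 0) tr0
        (mul_ne_zero hs two_ne_zero) ?_
      simp [sl2Tangent_xB1, tangentCoordsB1, Fin.sum_univ_five, mul_smul, one_add_one_eq_two]
    · refine mem_span_sl2TangentB1_of_eq_smul (tr 1 0 0) (tr (-1) 0 0) tr0
        (mul_ne_zero hs two_ne_zero) ?_
      simp [sl2Tangent_xB1, tangentCoordsB1, Fin.sum_univ_five, mul_smul, one_add_one_eq_two]
    · refine mem_span_sl2TangentB1_of_eq_smul tr0 (tr 0 1 0) tr0 hs ?_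
      simp [sl2Tangent_xB1, tangentCoordsB1, Fin.sum_univ_five]
    · refine mem_span_sl2TangentB1_of_eq_smul tr0 (tr 0 0 1) tr0 hs ?_
      simp [sl2Tangent_xB1, tangentCoordsB1, Fin.sum_univ_five]
    · refine mem_span_sl2TangentB1_of_eq_smul (tr 0 0 1) tr0 tr0 hs ?_
      simp [sl2Tangent_xB1, tangentCoordsB1, Fin.sum_univ_five]

lemma sl2Tangent_xB1_pauliZ_left : sl2Tangent xB1 !![1, 0; 0, -1] 0 0 = xB1 := by
  funext ⟨a, b, c⟩
  fin_cases a <;> fin_cases b <;> fin_cases c <;>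
    simp [sl2Tangent, tensor3_left_apply, tensor3_middle_apply, tensor3_right_apply, xB1]

theorem sl2_tangent_space_at_Bell_state :
    Module.finrank ℂ ↥(Submodule.span ℂ sl2TangentB1) = 5 ∧
    xB1 ∈ Submodule.span ℂ sl2TangentB1 := by
  constructor
  · rw [span_sl2TangentB1_eq, finrank_span_eq_card linearIndependent_tangentBasisB1,
      Fintype.card_fin]
  · exact Submodule.subset_span ⟨_, 0, 0, by simp [trace_fin_two], trace_zero _ _,
      trace_zero _ _, sl2Tangent_xB1_pauliZ_left.symm⟩
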